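/- If ℓ = t(n−1) + 1 for a non-negative integer t, then for every tree T on n vertices and every m ≥ 2, the 3-color Ramsey number satisfies r(K_{1,ℓ}, T, K_m) = (ℓ + n − 2)(m−1) + 1 = (t+1)(n−1)(m−1) + 1. -/

import Mathlib

open SimpleGraph
open scoped Classical

/-- `H` embeds into `G`: there is an injective graph homomorphism from `H` to `G`. -/
def Copies {α : Type*} {β : Type*} (H : SimpleGraph α) (G : SimpleGraph β) : Prop :=
  ∃ f : α → β, Function.Injective f ∧ ∀ ⦃a b : α⦄, H.Adj a b → G.Adj (f a) (f b)

/-- the star `K_{1,ℓ}` with `ℓ` leaves and center `0`. -/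
def starGraph (ℓ : ℕ) : SimpleGraph (Fin (ℓ + 1)) :=
  SimpleGraph.fromRel (fun a _ => a = 0)

/-- the graph of color `i` for a symmetric edge-coloring `c`. -/
def colorGraph {N k : ℕ} (c : Fin N → Fin N → Fin k) (i : Fin k) : SimpleGraph (Fin N) :=
  SimpleGraph.fromRel (fun a b => c a b = i)

/-- `K_N → (G₁, G₂)`: every red-blue coloring of `E(K_N)` yields a red `G₁` or a blue `G₂`. -/
def RamseyProp2 {α β : Type*} (N : ℕ) (G₁ : SimpleGraph α) (G₂ : SimpleGraph β) : Prop :=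
  ∀ R : SimpleGraph (Fin N), Copies G₁ R ∨ Copies G₂ Rᶜ

/-- the 2-color Ramsey number `r(G₁, G₂)`. -/
noncomputable def ramsey2 {α β : Type*} (G₁ : SimpleGraph α) (G₂ : SimpleGraph β) : ℕ :=
  sInf {N | RamseyProp2 N G₁ G₂}

/-- `K_N → (G₁, G₂, G₃)` for 3-colorings. -/
def RamseyProp3 {α β γ : Type*} (N : ℕ) (G₁ : SimpleGraph α) (G₂ : SimpleGraph β)
    (G₃ : SimpleGraph γ) : Prop :=
  ∀ c : Fin N → Fin N → Fin 3, (∀ a b, c a b = c b a) →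
    Copies G₁ (colorGraph c 0) ∨ Copies G₂ (colorGraph c 1) ∨ Copies G₃ (colorGraph c 2)

/-- the 3-color Ramsey number `r(G₁, G₂, G₃)`. -/
noncomputable def ramsey3 {α β γ : Type*} (G₁ : SimpleGraph α) (G₂ : SimpleGraph β)
    (G₃ : SimpleGraph γ) : ℕ :=
  sInf {N | RamseyProp3 N G₁ G₂ G₃}

/-- the chromatic number as a natural number. -/
noncomputable def chrom {β : Type*} (H : SimpleGraph β) : ℕ :=
  sInf {k | H.Colorable k}

/-- the surplus `s(H)`: the minimum size of a color class over proper colorings of `H`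
with `chrom H` colors. -/
noncomputable def surplus {β : Type*} [Fintype β] (H : SimpleGraph β) : ℕ :=
  sInf {s | ∃ C : H.Coloring (Fin (chrom H)), ∃ i : Fin (chrom H),
    s = (Finset.univ.filter (fun v => C v = i)).card}

/-! Upper bound, by induction on `m`. Put `D = ℓ + n - 2`. If a vertex has green degree at least
`D (m - 2) + 1`, induction applies inside its green neighbourhood, and a green `K_{m-1}` there
extends to a green `K_m`. Otherwise every green degree is at most `D (m - 2)` and, unless there is
a red `K_{1,ℓ}`, every red degree is at most `ℓ - 1`; so every blue degree is at least `n - 1`, and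
a tree on `n` vertices embeds greedily into the blue graph, one leaf at a time.

Lower bound: split `(t + 1)(n - 1)(m - 1)` vertices into `m - 1` blocks of `t + 1` cells of size
`n - 1`; colour edges within a cell blue, between cells of the same block red, between blocks
green. Blue components have `n - 1` vertices, red degrees are `t (n - 1) < ℓ`, and the green graph
is `(m - 1)`-partite. -/

open Finset

theorem copies_iff_isContained {α β : Type*} {H : SimpleGraph α} {G : SimpleGraph β} :
    Copies H G ↔ H ⊑ G :=
  ⟨fun ⟨f, hf, hadj⟩ => ⟨⟨⟨f, fun h => hadj h⟩, hf⟩⟩,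
    fun ⟨f⟩ => ⟨f, f.injective, fun _ _ => f.toHom.map_adj⟩⟩

section Ramsey

variable {α β γ : Type*} {G₁ : SimpleGraph α} {G₂ : SimpleGraph β} {G₃ : SimpleGraph γ}

theorem ramseyProp3_of_forall_sup_eq_top {N : ℕ}
    (h : ∀ R B K : SimpleGraph (Fin N), R ⊔ B ⊔ K = ⊤ → G₁ ⊑ R ∨ G₂ ⊑ B ∨ G₃ ⊑ K) :
    RamseyProp3 N G₁ G₂ G₃ := by
  intro c _
  simp only [copies_iff_isContained]
  refine h _ _ _ (eq_top_iff.2 fun a b hab => ?_)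
  simp only [colorGraph, sup_adj, fromRel_adj]
  generalize c a b = x
  fin_cases x <;> simp_all

theorem not_ramseyProp3_of_sup_eq_top {V : Type*} [Fintype V] {R B K : SimpleGraph V}
    (hsup : R ⊔ B ⊔ K = ⊤) {N : ℕ} (hN : N ≤ Fintype.card V)
    (h₁ : ¬ G₁ ⊑ R) (h₂ : ¬ G₂ ⊑ B) (h₃ : ¬ G₃ ⊑ K) : ¬ RamseyProp3 N G₁ G₂ G₃ := by
  obtain ⟨e⟩ := Function.Embedding.nonempty_of_card_le (α := Fin N) (β := V) (by simpa using hN)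
  let c : Fin N → Fin N → Fin 3 := fun a b =>
    if R.Adj (e a) (e b) then 0 else if B.Adj (e a) (e b) then 1 else 2
  have hc : ∀ a b, c a b = c b a := fun a b => by simp only [c, R.adj_comm, B.adj_comm]
  have hR : colorGraph c 0 ≤ R.comap e := fun a b hab => by
    simp only [colorGraph, fromRel_adj, c] at hab
    grind [comap_adj]
  have hB : colorGraph c 1 ≤ B.comap e := fun a b hab => by
    simp only [colorGraph, fromRel_adj, c] at hab
    grind [comap_adj]
  have hK : colorGraph c 2 ≤ K.comap e := fun a b hab => by
    have hcover : (R ⊔ B ⊔ K).Adj (e a) (e b) := hsup ▸ e.injective.ne hab.1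
    simp only [colorGraph, fromRel_adj, c] at hab
    simp only [sup_adj] at hcover
    grind [comap_adj]
  intro h
  rcases h c hc with h | h | h <;> rw [copies_iff_isContained] at h
  · exact h₁ ((h.mono_right hR).trans (Embedding.comap e R).isContained)
  · exact h₂ ((h.mono_right hB).trans (Embedding.comap e B).isContained)
  · exact h₃ ((h.mono_right hK).trans (Embedding.comap e K).isContained)

theorem ramsey3_eq_succ {N : ℕ} (h : RamseyProp3 (N + 1) G₁ G₂ G₃)
    (h' : ∀ M ≤ N, ¬ RamseyProp3 M G₁ G₂ G₃) : ramsey3 G₁ G₂ G₃ = N + 1 :=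
  le_antisymm (Nat.sInf_le h) (le_csInf ⟨_, h⟩ fun M hM => not_lt.1 fun hlt => h' M (by omega) hM)

end Ramsey

namespace SimpleGraph

variable {α β V : Type*}

theorem starGraph_isContained_iff [Fintype V] {G : SimpleGraph V} [DecidableRel G.Adj] {ℓ : ℕ} :
    _root_.starGraph ℓ ⊑ G ↔ ∃ v, ℓ ≤ G.degree v := by
  constructor
  · rintro ⟨f⟩
    have hcenter : (_root_.starGraph ℓ).degree 0 = ℓ := by
      -- `_root_.starGraph ℓ` is `SimpleGraph.starGraph 0` up to the decidability instance
      convert degree_starGraph_center (r := (0 : Fin (ℓ + 1))) using 1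
      · congr!
      · simp
    exact ⟨f 0, hcenter.ge.trans (f.degree_le 0)⟩
  · rintro ⟨v, hv⟩
    obtain ⟨e⟩ := Function.Embedding.nonempty_of_card_le (α := Fin ℓ) (β := G.neighborSet v)
      (by rwa [Fintype.card_fin, card_neighborSet_eq_degree])
    have hadj : ∀ i, G.Adj v (e i) := fun i => (e i).2
    refine ⟨⟨⟨Fin.cons v fun i => e i, fun {a b} hab => ?_⟩, ?_⟩⟩
    · simp only [_root_.starGraph, fromRel_adj] at hab
      induction a using Fin.cases <;> induction b using Fin.cases <;> simp_all [(hadj _).symm]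
    · refine Fin.cons_injective_iff.2 ⟨?_, Subtype.val_injective.comp e.injective⟩
      rintro ⟨i, hi⟩
      exact (hadj i).ne hi.symm

theorem Copy.exists_adj_notMem_range [Fintype α] [Fintype β] {H : SimpleGraph α}
    {G : SimpleGraph β} [DecidableRel G.Adj] (f : Copy H G) (a : α)
    (h : Fintype.card α ≤ G.degree (f a)) : ∃ w, G.Adj (f a) w ∧ w ∉ Set.range f := by
  by_contra! hw
  have hsub : G.neighborFinset (f a) ⊆ (univ.image f).erase (f a) := fun w hw' => by
    rw [mem_neighborFinset] at hw'
    obtain ⟨b, rfl⟩ := hw w hw'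
    exact mem_erase.2 ⟨hw'.ne', mem_image_of_mem _ (mem_univ b)⟩
  have := card_le_card hsub
  rw [card_erase_of_mem (mem_image_of_mem _ (mem_univ a)), card_neighborFinset_eq_degree] at this
  have := (card_image_le (s := univ) (f := f)).trans_eq card_univ
  have := Fintype.card_pos_iff.2 ⟨a⟩
  omega

theorem isContained_of_copy_induce_compl_singleton {T : SimpleGraph α} {G : SimpleGraph β}
    {v : α} {u : ({v}ᶜ : Set α)} (hu : ∀ x, T.Adj v x ↔ x = u) (f : Copy (T.induce {v}ᶜ) G)
    {w : β} (hw : G.Adj (f u) w) (hwf : w ∉ Set.range f) : T ⊑ G := by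
  let g : α → β := fun a => if h : a = v then w else f ⟨a, h⟩
  have hgv : g v = w := dif_pos rfl
  have hg : ∀ a (h : a ≠ v), g a = f ⟨a, h⟩ := fun a h => dif_neg h
  refine ⟨⟨⟨g, fun {a b} hab => ?_⟩, fun a b hab => ?_⟩⟩
  · by_cases ha : a = v
    · subst ha
      obtain rfl := (hu b).1 hab
      simpa [hgv, hg u u.2] using hw.symm
    by_cases hb : b = v
    · subst hb
      obtain rfl := (hu a).1 hab.symm
      simpa [hgv, hg u u.2] using hw
    rw [hg a ha, hg b hb]
    exact f.toHom.map_adj hab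
  · change g a = g b at hab
    by_cases ha : a = v <;> by_cases hb : b = v
    · rw [ha, hb]
    · rw [ha, hgv, hg b hb] at hab
      exact (hwf ⟨_, hab.symm⟩).elim
    · rw [hb, hgv, hg a ha] at hab
      exact (hwf ⟨_, hab⟩).elim
    · rw [hg a ha, hg b hb] at hab
      exact congrArg Subtype.val (f.injective hab)

theorem IsTree.isContained_of_le_degree [Fintype α] [Fintype β] [Nonempty β] {T : SimpleGraph α}
    {G : SimpleGraph β} [DecidableRel G.Adj] (hT : T.IsTree)
    (hdeg : ∀ w, Fintype.card α - 1 ≤ G.degree w) : T ⊑ G := by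
  suffices h : ∀ (α) [Fintype α] (T : SimpleGraph α), T.IsTree →
      (∀ w, Fintype.card α - 1 ≤ G.degree w) → T ⊑ G from h α T hT hdeg
  refine fun α _ => Fintype.induction_subsingleton_or_nontrivial (P := fun α (_ : Fintype α) =>
    ∀ T : SimpleGraph α, T.IsTree → (∀ w, Fintype.card α - 1 ≤ G.degree w) → T ⊑ G) α ?_ ?_
  · intro α _ _ T _ _
    exact ⟨⟨⟨fun _ => Classical.arbitrary β, fun h => (h.ne (Subsingleton.elim _ _)).elim⟩,
      fun _ _ _ => Subsingleton.elim _ _⟩⟩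
  · intro α _ _ ih T hT hdeg
    obtain ⟨v, hv⟩ := hT.exists_vert_degree_one_of_nontrivial
    obtain ⟨u, hvu, hu⟩ := degree_eq_one_iff_existsUnique_adj.1 hv
    have hcard : Fintype.card ({v}ᶜ : Set α) = Fintype.card α - 1 := by
      simp [Finset.filter_ne']
    have hT' : (T.induce {v}ᶜ).IsTree :=
      ⟨hT.connected.induce_compl_singleton_of_degree_eq_one hv, hT.isAcyclic.induce _⟩
    obtain ⟨f⟩ := ih _ (by rw [hcard]; exact Nat.sub_lt Fintype.card_pos one_pos) _ hT'
      fun w => by rw [hcard]; exact (Nat.sub_le _ _).trans (hdeg w)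
    obtain ⟨w, hw, hwf⟩ := f.exists_adj_notMem_range ⟨u, hvu.ne'⟩ (hcard ▸ hdeg _)
    exact isContained_of_copy_induce_compl_singleton (u := ⟨u, hvu.ne'⟩)
      (fun x => ⟨hu x, fun h => h ▸ hvu⟩) f hw hwf

theorem CliqueFree.induce_neighborSet {G : SimpleGraph V} {n : ℕ} (h : G.CliqueFree (n + 1))
    (v : V) : (G.induce (G.neighborSet v)).CliqueFree n := by
  rw [cliqueFree_induce_iff]
  simpa using G.cliqueFreeOn_univ.2 h |>.of_succ G (Set.mem_univ v)

theorem card_sub_one_le_degree_add_degree_add_degree [Fintype V] [DecidableEq V]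
    {R B K : SimpleGraph V} [DecidableRel R.Adj] [DecidableRel B.Adj] [DecidableRel K.Adj]
    (hsup : R ⊔ B ⊔ K = ⊤) (v : V) :
    Fintype.card V - 1 ≤ R.degree v + B.degree v + K.degree v := by
  have hsub : ({v}ᶜ : Finset V) ⊆
      R.neighborFinset v ∪ B.neighborFinset v ∪ K.neighborFinset v := fun w hw => by
    have : (R ⊔ B ⊔ K).Adj v w := hsup ▸ (Ne.symm (by simpa using hw))
    simpa [or_assoc] using this
  calc Fintype.card V - 1 = #({v}ᶜ : Finset V) := by rw [card_compl, card_singleton]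
    _ ≤ #(R.neighborFinset v ∪ B.neighborFinset v ∪ K.neighborFinset v) := card_le_card hsub
    _ ≤ #(R.neighborFinset v ∪ B.neighborFinset v) + K.degree v := card_union_le _ _
    _ ≤ R.degree v + B.degree v + K.degree v := Nat.add_le_add_right (card_union_le _ _) _

theorem starGraph_or_tree_or_top_isContained [Fintype α] [Fintype V] {T : SimpleGraph α}
    (hT : T.IsTree) {ℓ : ℕ} (hℓ : 1 ≤ ℓ) (m : ℕ)
    (R B K : SimpleGraph V) (hsup : R ⊔ B ⊔ K = ⊤)
    (hV : (ℓ + Fintype.card α - 2) * m + 1 ≤ Fintype.card V) :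
    _root_.starGraph ℓ ⊑ R ∨ T ⊑ B ∨ (⊤ : SimpleGraph (Fin (m + 1))) ⊑ K := by
  induction m generalizing V with
  | zero =>
    refine .inr (.inr ?_)
    rw [← not_cliqueFree_iff_top_isContained, cliqueFree_one, not_isEmpty_iff]
    exact Fintype.card_pos_iff.1 (by omega)
  | succ m ih =>
    by_cases hK : ∃ v, (ℓ + Fintype.card α - 2) * m + 1 ≤ K.degree v
    · obtain ⟨v, hv⟩ := hK
      have hsup' : R.induce (K.neighborSet v) ⊔ B.induce (K.neighborSet v) ⊔
          K.induce (K.neighborSet v) = ⊤ := by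
        ext x y
        have := congrArg (fun G : SimpleGraph V => G.Adj x y) hsup
        simp only [sup_adj, top_adj, eq_iff_iff] at this
        simp [this, Subtype.ext_iff]
      rcases ih _ _ _ hsup' (by rwa [card_neighborSet_eq_degree]) with h | h | h
      · exact .inl (h.trans ⟨Copy.induce R _⟩)
      · exact .inr (.inl (h.trans ⟨Copy.induce B _⟩))
      · refine .inr (.inr ?_)
        rw [← not_cliqueFree_iff_top_isContained] at h ⊢
        exact fun hK => h (hK.induce_neighborSet v)
    by_cases hR : ∃ v, ℓ ≤ R.degree v
    · exact .inl (starGraph_isContained_iff.2 hR)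
    push Not at hK hR
    have : Nonempty V := Fintype.card_pos_iff.1 (by omega)
    refine .inr (.inl (hT.isContained_of_le_degree fun v => ?_))
    have hsum := card_sub_one_le_degree_add_degree_add_degree hsup v
    have hgreen := hK v
    have hred := hR v
    have hα := Fintype.card_pos_iff.2 hT.connected.nonempty
    rw [Nat.mul_succ] at hV
    omega

variable (X Y Z : Type*)

def crossBlockGraph : SimpleGraph (X × Y × Z) := (⊤ : SimpleGraph X).comap Prod.fst

def sameCellGraph : SimpleGraph (X × Y × Z) :=
  ((⊤ : SimpleGraph (X × Y)).comap fun p => (p.1, p.2.1))ᶜ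

def crossCellGraph : SimpleGraph (X × Y × Z) := (sameCellGraph X Y Z ⊔ crossBlockGraph X Y Z)ᶜ

variable {X Y Z}

theorem crossCellGraph_sup_sameCellGraph_sup_crossBlockGraph :
    crossCellGraph X Y Z ⊔ sameCellGraph X Y Z ⊔ crossBlockGraph X Y Z = ⊤ := by
  rw [crossCellGraph, sup_assoc, compl_sup_eq_top]

theorem cliqueFree_crossBlockGraph [Fintype X] {m : ℕ} (hm : Fintype.card X < m) :
    (crossBlockGraph X Y Z).CliqueFree m :=
  (Coloring.mk Prod.fst fun h => h).colorable.cliqueFree hm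

theorem card_le_of_isContained_sameCellGraph {α : Type*} [Fintype α] [Fintype Z]
    {T : SimpleGraph α} (hT : T.Connected) (h : T ⊑ sameCellGraph X Y Z) :
    Fintype.card α ≤ Fintype.card Z := by
  obtain ⟨f⟩ := h
  let cell : X × Y × Z → X × Y := fun p => (p.1, p.2.1)
  have hwalk : ∀ {a b}, T.Walk a b → cell (f a) = cell (f b) := by
    intro a b p
    induction p with
    | nil => rfl
    | cons hab _ ih =>
      have := f.toHom.map_adj hab
      simp only [sameCellGraph, compl_adj, comap_adj, top_adj, not_not] at this
      exact this.2.trans ih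
  refine Fintype.card_le_of_injective (fun a => (f a).2.2) fun a b hab => f.injective ?_
  have := hwalk (hT.preconnected a b).some
  simp only [cell, Prod.mk.injEq] at this
  exact Prod.ext this.1 (Prod.ext this.2 hab)

theorem degree_crossCellGraph_le [Fintype X] [Fintype Y] [Fintype Z] [DecidableEq Y]
    (p : X × Y × Z) :
    (crossCellGraph X Y Z).degree p ≤ (Fintype.card Y - 1) * Fintype.card Z := by
  have hadj : ∀ q, (crossCellGraph X Y Z).Adj p q ↔ q.1 = p.1 ∧ q.2.1 ≠ p.2.1 := fun q => by
    simp only [crossCellGraph, sameCellGraph, crossBlockGraph, compl_adj, sup_adj, comap_adj,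
      top_adj]
    grind
  calc (crossCellGraph X Y Z).degree p
      ≤ #(({p.2.1}ᶜ : Finset Y) ×ˢ (univ : Finset Z)) := by
        refine card_le_card_of_injOn (fun q => q.2) (fun q hq => ?_) fun q hq q' hq' h => ?_
        · simp_all
        · simp only [mem_coe, mem_neighborFinset, hadj] at hq hq'
          exact Prod.ext (hq.1.trans hq'.1.symm) h
    _ = (Fintype.card Y - 1) * Fintype.card Z := by simp [card_compl]

end SimpleGraph

section StarTreeComplete

variable {α : Type*} [Fintype α] {T : SimpleGraph α} {ℓ : ℕ}

theorem ramseyProp3_starGraph_tree_top (hT : T.IsTree) (hℓ : 1 ≤ ℓ) (m : ℕ) :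
    RamseyProp3 ((ℓ + Fintype.card α - 2) * m + 1) (_root_.starGraph ℓ) T
      (⊤ : SimpleGraph (Fin (m + 1))) :=
  ramseyProp3_of_forall_sup_eq_top fun R B K hsup =>
    starGraph_or_tree_or_top_isContained hT hℓ m R B K hsup (by simp)

theorem not_ramseyProp3_starGraph_tree_top (hT : T.Connected) {t m N : ℕ}
    (hℓ : t * (Fintype.card α - 1) < ℓ) (hN : N ≤ (t + 1) * (Fintype.card α - 1) * m) :
    ¬ RamseyProp3 N (_root_.starGraph ℓ) T (⊤ : SimpleGraph (Fin (m + 1))) := by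
  refine not_ramseyProp3_of_sup_eq_top (V := Fin m × Fin (t + 1) × Fin (Fintype.card α - 1))
    crossCellGraph_sup_sameCellGraph_sup_crossBlockGraph ?_ ?_ ?_ ?_
  · simpa [Fintype.card_prod, mul_comm, mul_left_comm] using hN
  · rw [starGraph_isContained_iff]
    rintro ⟨p, hp⟩
    have := degree_crossCellGraph_le p
    simp only [Fintype.card_fin, Nat.add_sub_cancel] at this
    omega
  · intro h
    have hle := card_le_of_isContained_sameCellGraph hT h
    have := Fintype.card_pos_iff.2 hT.nonempty
    rw [Fintype.card_fin] at hle
    omega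
  · rw [← not_cliqueFree_iff_top_isContained, not_not]
    exact cliqueFree_crossBlockGraph (by simp)

end StarTreeComplete

theorem stmt8 (t n ℓ m : ℕ) (hℓ : ℓ = t * (n - 1) + 1) (hm : 2 ≤ m)
    (T : SimpleGraph (Fin n)) (hT : T.IsTree) :
    ramsey3 (_root_.starGraph ℓ) T (⊤ : SimpleGraph (Fin m)) = (ℓ + n - 2) * (m - 1) + 1 ∧
    ramsey3 (_root_.starGraph ℓ) T (⊤ : SimpleGraph (Fin m)) = (t + 1) * (n - 1) * (m - 1) + 1 := by
  obtain ⟨k, rfl⟩ : ∃ k, m = k + 1 := ⟨m - 1, by omega⟩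
  have hn : 0 < n := Fin.pos_iff_nonempty.2 hT.connected.nonempty
  have hD : ℓ + n - 2 = (t + 1) * (n - 1) := by rw [hℓ, add_one_mul]; omega
  have hupper := ramseyProp3_starGraph_tree_top hT (ℓ := ℓ) (by omega) k
  have hlower := fun N => not_ramseyProp3_starGraph_tree_top hT.connected
    (ℓ := ℓ) (t := t) (m := k) (N := N)
  simp only [Fintype.card_fin, hD] at hupper hlower
  have hr := ramsey3_eq_succ hupper fun M hM => hlower M (by omega) hM
  simp only [Nat.add_sub_cancel, hD]
  exact ⟨hr, hr⟩
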